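/- Fix signs σ, τ ∈ {−1, +1}, an integer β ∈ ℤ, and distinct indices p, q ∈ {1,…,n}. If x, y ∈ ((1/2)ℤ)^n satisfy σx_p + τx_q ≥ β and σy_p + τy_q ≥ β, then both ⌊(x+y)/2⌋' and ⌈(x+y)/2⌉' (custom roundings applied componentwise) satisfy the same constraint: σ⌊(x_p+y_p)/2⌋' + τ⌊(x_q+y_q)/2⌋' ≥ β and σ⌈(x_p+y_p)/2⌉' + τ⌈(x_q+y_q)/2⌉' ≥ β. Equivalently, the indicator function on ((1/2)ℤ)^n taking value 0 where σx_p + τx_q ≥ β and ∞ otherwise is L-convex. -/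
import Mathlib


open Classical in
/-- Custom flooring on `(1/4)ℤ`, along the edge directions of the directed graph
`(1/2)ℤ`: half-integers are fixed, and other quarter-integers are rounded away
from integers. -/
noncomputable def hfloor (x : ℝ) : ℝ :=
  if ∃ k : ℤ, x = (k : ℝ) / 2 then x
  else if ∃ k : ℤ, x - 1/4 = (k : ℝ) then x + 1/4
  else x - 1/4

open Classical in
/-- Custom ceiling on `(1/4)ℤ`: half-integers are fixed, and other
quarter-integers are rounded towards integers. -/
noncomputable def hceil (x : ℝ) : ℝ :=
  if ∃ k : ℤ, x = (k : ℝ) / 2 then x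
  else if ∃ k : ℤ, x - 1/4 = (k : ℝ) then x - 1/4
  else x + 1/4

/-- Floor correction: `hfloor (s/4) = (s + hd s)/4`. -/
def hd (s : ℤ) : ℤ := if s % 2 = 0 then 0 else if s % 4 = 1 then 1 else -1

/-- Ceil correction: `hceil (s/4) = (s + cd s)/4`. -/
def cd (s : ℤ) : ℤ := if s % 2 = 0 then 0 else if s % 4 = 1 then -1 else 1

lemma half_cond (s : ℤ) : (∃ k : ℤ, (s : ℝ)/4 = (k : ℝ)/2) ↔ s % 2 = 0 := by
  constructor
  · rintro ⟨k, hk⟩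
    have h : (s : ℝ) = 2 * k := by linarith
    have : s = 2 * k := by exact_mod_cast h
    omega
  · intro h
    obtain ⟨m, hm⟩ : ∃ m, s = 2 * m := ⟨s / 2, by omega⟩
    exact ⟨m, by rw [hm]; push_cast; ring⟩

lemma quarter_cond (s : ℤ) : (∃ k : ℤ, (s : ℝ)/4 - 1/4 = (k : ℝ)) ↔ s % 4 = 1 := by
  constructor
  · rintro ⟨k, hk⟩
    have h : (s : ℝ) = 4 * k + 1 := by linarith
    have : s = 4 * k + 1 := by exact_mod_cast h
    omega
  · intro h
    obtain ⟨m, hm⟩ : ∃ m, s = 4 * m + 1 := ⟨s / 4, by omega⟩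
    exact ⟨m, by rw [hm]; push_cast; ring⟩

lemma hfloor_div4 (s : ℤ) : hfloor ((s : ℝ)/4) = ((s + hd s : ℤ) : ℝ)/4 := by
  unfold hfloor hd
  by_cases h2 : s % 2 = 0
  · rw [if_pos ((half_cond s).2 h2), if_pos h2]
    push_cast; ring
  · rw [if_neg (fun h => h2 ((half_cond s).1 h)), if_neg h2]
    by_cases h4 : s % 4 = 1
    · rw [if_pos ((quarter_cond s).2 h4), if_pos h4]; push_cast; ring
    · rw [if_neg (fun h => h4 ((quarter_cond s).1 h)), if_neg h4]; push_cast; ring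

lemma hceil_div4 (s : ℤ) : hceil ((s : ℝ)/4) = ((s + cd s : ℤ) : ℝ)/4 := by
  unfold hceil cd
  by_cases h2 : s % 2 = 0
  · rw [if_pos ((half_cond s).2 h2), if_pos h2]
    push_cast; ring
  · rw [if_neg (fun h => h2 ((half_cond s).1 h)), if_neg h2]
    by_cases h4 : s % 4 = 1
    · rw [if_pos ((quarter_cond s).2 h4), if_pos h4]; push_cast; ring
    · rw [if_neg (fun h => h4 ((quarter_cond s).1 h)), if_neg h4]; push_cast; ring

lemma key_floor (e f s t B : ℤ) (he : e = 1 ∨ e = -1) (hf : f = 1 ∨ f = -1)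
    (h : e * s + f * t ≥ 4 * B) : e * (s + hd s) + f * (t + hd t) ≥ 4 * B := by
  unfold hd
  rcases he with rfl | rfl <;> rcases hf with rfl | rfl <;> split_ifs <;> omega

lemma key_ceil (e f s t B : ℤ) (he : e = 1 ∨ e = -1) (hf : f = 1 ∨ f = -1)
    (h : e * s + f * t ≥ 4 * B) : e * (s + cd s) + f * (t + cd t) ≥ 4 * B := by
  unfold cd
  rcases he with rfl | rfl <;> rcases hf with rfl | rfl <;> split_ifs <;> omega

/-- L-convexity of the indicator of a two-variable UTVPI constraint
`σ x_p + τ x_q ≥ β`: if two half-integral vectors `x, y` satisfy the constraint,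
then so do the componentwise custom roundings `⌊(x+y)/2⌋'` and `⌈(x+y)/2⌉'`. -/
theorem two_variable_indicator_L_convex {n : ℕ}
    (σ τ : ℝ) (hσ : σ = -1 ∨ σ = 1) (hτ : τ = -1 ∨ τ = 1)
    (β : ℤ) (p q : Fin n) (hpq : p ≠ q)
    (x y : Fin n → ℝ)
    (hx : ∀ j, ∃ k : ℤ, x j = (k : ℝ) / 2) (hy : ∀ j, ∃ k : ℤ, y j = (k : ℝ) / 2)
    (hcx : σ * x p + τ * x q ≥ (β : ℝ)) (hcy : σ * y p + τ * y q ≥ (β : ℝ)) :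
    (σ * hfloor ((x p + y p) / 2) + τ * hfloor ((x q + y q) / 2) ≥ (β : ℝ)) ∧
    (σ * hceil ((x p + y p) / 2) + τ * hceil ((x q + y q) / 2) ≥ (β : ℝ)) := by
  obtain ⟨a, ha⟩ := hx p
  obtain ⟨c, hc⟩ := hx q
  obtain ⟨b, hb⟩ := hy p
  obtain ⟨d, hd'⟩ := hy q
  -- rewrite midpoints
  have hp : (x p + y p) / 2 = ((a + b : ℤ) : ℝ) / 4 := by
    rw [ha, hb]; push_cast; ring
  have hq : (x q + y q) / 2 = ((c + d : ℤ) : ℝ) / 4 := by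
    rw [hc, hd']; push_cast; ring
  rw [ha, hc] at hcx
  rw [hb, hd'] at hcy
  rw [hp, hq, hfloor_div4, hfloor_div4, hceil_div4, hceil_div4]
  -- integer sign
  obtain ⟨e, he, hes⟩ : ∃ e : ℤ, (e = 1 ∨ e = -1) ∧ σ = (e : ℝ) := by
    rcases hσ with rfl | rfl
    · exact ⟨-1, Or.inr rfl, by norm_num⟩
    · exact ⟨1, Or.inl rfl, by norm_num⟩
  obtain ⟨f, hf, hfs⟩ : ∃ f : ℤ, (f = 1 ∨ f = -1) ∧ τ = (f : ℝ) := by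
    rcases hτ with rfl | rfl
    · exact ⟨-1, Or.inr rfl, by norm_num⟩
    · exact ⟨1, Or.inl rfl, by norm_num⟩
  subst hes hfs
  have H1 : e * a + f * c ≥ 2 * β := by
    have h : ((e * a + f * c : ℤ) : ℝ) ≥ ((2 * β : ℤ) : ℝ) := by push_cast; linarith
    exact_mod_cast h
  have H2 : e * b + f * d ≥ 2 * β := by
    have h : ((e * b + f * d : ℤ) : ℝ) ≥ ((2 * β : ℤ) : ℝ) := by push_cast; linarith
    exact_mod_cast h
  have hsum : e * (a + b) + f * (c + d) ≥ 4 * β := by linarith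
  constructor
  · have Z := key_floor e f (a + b) (c + d) β he hf hsum
    have h : ((e * ((a + b) + hd (a + b)) + f * ((c + d) + hd (c + d)) : ℤ) : ℝ)
        ≥ ((4 * β : ℤ) : ℝ) := by exact_mod_cast Z
    push_cast at h ⊢
    linarith
  · have Z := key_ceil e f (a + b) (c + d) β he hf hsum
    have h : ((e * ((a + b) + cd (a + b)) + f * ((c + d) + cd (c + d)) : ℤ) : ℝ)
        ≥ ((4 * β : ℤ) : ℝ) := by exact_mod_cast Z
    push_cast at h ⊢
    linarith
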